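/- Let T be a join tree of a hypergraph H with a subtree T_free containing exactly the free variables, and let the nodes of H containing a fixed vertex v_i all project (after removing vertices ordered after v_i) to a family V of sets each containing v_i. If the family V has no maximum element under inclusion, then there exist two vertices v_a, v_b appearing in sets of V that are not neighbors in H, and hence v_a, v_b, v_i form a pattern where v_i is a common neighbor of two non-neighbors. -/

import Mathlib

/-- Two vertices are neighbors in a hypergraph if some hyperedge contains both. -/
def Nbr {V : Type*} (E : Finset (Finset V)) (x y : V) : Prop :=
  ∃ e ∈ E, x ∈ e ∧ y ∈ e

/-- Join tree: a tree on the hyperedges with the running intersection property. -/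
def IsJoinTreeOf {V ι : Type*} (T : SimpleGraph ι) (lab : ι → Finset V)
    (E : Finset (Finset V)) : Prop :=
  T.IsTree ∧ (∀ i, lab i ∈ E) ∧ (∀ e ∈ E, ∃ i, lab i = e) ∧
    ∀ v : V, (T.induce {i | v ∈ lab i}).Preconnected

/-- A hypergraph is acyclic if it admits a join tree. -/
def HGAcyclic {V : Type*} (E : Finset (Finset V)) : Prop :=
  ∃ (ι : Type) (T : SimpleGraph ι) (lab : ι → Finset V), IsJoinTreeOf T lab E

/-!
The running intersection property says that, for every vertex `v`, the join-tree nodes whose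
hyperedge contains `v` form a subtree, and subtrees of a tree have the Helly property: if they
pairwise intersect, they all share a node. If every two vertices occurring in `F` were neighbors,
their subtrees would pairwise intersect, and the hyperedge at a common node would contain every
vertex, i.e. be a maximum of `F`. Since every hyperedge contains `vi`, a pair of non-neighbors
is automatically distinct, avoids `vi`, and has `vi` as a common neighbor.
-/

namespace SimpleGraph

variable {V : Type*} {G : SimpleGraph V}

/-- In a tree these are exactly the vertex sets of subtrees. -/
def IsPathConvex (G : SimpleGraph V) (S : Set V) : Prop :=
  ∀ ⦃u v : V⦄ (p : G.Walk u v), p.IsPath → u ∈ S → v ∈ S → ∀ w ∈ p.support, w ∈ S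

theorem IsPathConvex.inter {S S' : Set V} (hS : G.IsPathConvex S) (hS' : G.IsPathConvex S') :
    G.IsPathConvex (S ∩ S') :=
  fun _ _ p hp hu hv w hw => ⟨hS p hp hu.1 hv.1 w hw, hS' p hp hu.2 hv.2 w hw⟩

theorem IsAcyclic.isPathConvex_of_preconnected_induce (hG : G.IsAcyclic) {S : Set V}
    (hS : (G.induce S).Preconnected) : G.IsPathConvex S := by
  classical
  intro u v p hp hu hv w hw
  obtain ⟨q⟩ := hS ⟨u, hu⟩ ⟨v, hv⟩
  set q' := q.map (Embedding.induce S).toHom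
  have hpq : p = q'.bypass :=
    congrArg Subtype.val ((hG.subsingleton_path u v).elim ⟨p, hp⟩ ⟨q'.bypass, q'.bypass_isPath⟩)
  have hwq : w ∈ q'.support := q'.support_bypass_subset_support (hpq ▸ hw)
  rw [Walk.support_map] at hwq
  obtain ⟨⟨x, hx⟩, -, rfl⟩ := List.mem_map.mp hwq
  exact hx

theorem Walk.IsPath.append_of_forall_mem_support {u v w : V} {p : G.Walk u v} {q : G.Walk v w}
    (hp : p.IsPath) (hq : q.IsPath) (h : ∀ x ∈ p.support, x ∈ q.support → x = v) :
    (p.append q).IsPath := by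
  rw [Walk.isPath_def, Walk.support_append]
  refine hp.support_nodup.append hq.support_nodup.tail fun x hxp hxq => ?_
  have hv : v ∉ q.support.tail := by
    have := hq.support_nodup
    rw [← Walk.cons_tail_support] at this
    exact (List.nodup_cons.mp this).1
  exact hv (h x hxp (List.mem_of_mem_tail hxq) ▸ hxq)

theorem Preconnected.inter_inter_nonempty_of_isPathConvex (hG : G.Preconnected)
    {A B C : Set V} (hA : G.IsPathConvex A) (hB : G.IsPathConvex B) (hC : G.IsPathConvex C)
    (hAB : (A ∩ B).Nonempty) (hAC : (A ∩ C).Nonempty) (hBC : (B ∩ C).Nonempty) :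
    (A ∩ B ∩ C).Nonempty := by
  classical
  obtain ⟨a, haA, haB⟩ := hAB
  obtain ⟨b, hbA, hbC⟩ := hAC
  obtain ⟨c, hcB, hcC⟩ := hBC
  obtain ⟨p, hp⟩ := (hG a b).exists_isPath
  obtain ⟨q, hq⟩ := (hG b c).exists_isPath
  -- The first vertex `m` of `p` on `q` splices the two into an `a`–`c` path through `m`.
  obtain ⟨m, hmq, hmp, hfirst⟩ :=
    p.exists_mem_support_forall_mem_support_imp_eq q.support.toFinset ⟨b, by simp⟩
  rw [List.mem_toFinset] at hmq
  have hr : ((p.takeUntil m hmp).append (q.dropUntil m hmq)).IsPath :=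
    (hp.takeUntil hmp).append_of_forall_mem_support (hq.dropUntil hmq) fun x hx hxq =>
      hfirst x (List.mem_toFinset.mpr (q.support_dropUntil_subset_support hmq hxq)) hx
  refine ⟨m, ⟨hA p hp haA hbA m hmp, hB _ hr haB hcB m ?_⟩, hC q hq hbC hcC m hmq⟩
  rw [Walk.mem_support_append_iff]
  exact Or.inl (Walk.end_mem_support _)

theorem Connected.nonempty_biInter_of_isPathConvex (hG : G.Connected) {κ : Type*}
    {S : κ → Set V} {s : Finset κ} (hS : ∀ k ∈ s, G.IsPathConvex (S k))
    (hpair : ∀ j ∈ s, ∀ k ∈ s, (S j ∩ S k).Nonempty) : (⋂ k ∈ s, S k).Nonempty := by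
  obtain rfl | hs := s.eq_empty_or_nonempty
  · have := hG.nonempty
    simp
  induction hs using Finset.Nonempty.cons_induction generalizing S with
  | singleton a => simpa using hpair a (by simp) a (by simp)
  | cons a s ha hs ih =>
    have hSa : G.IsPathConvex (S a) := hS a (by simp)
    -- The traces `S a ∩ S k` still pairwise intersect, by the three-set case.
    obtain ⟨m, hm⟩ := ih (S := fun k => S a ∩ S k)
      (fun k hk => hSa.inter (hS k (by simp [hk])))
      (fun j hj k hk => by
        obtain ⟨x, ⟨hxa, hxj⟩, hxk⟩ := hG.preconnected.inter_inter_nonempty_of_isPathConvex hSa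
          (hS j (by simp [hj])) (hS k (by simp [hk])) (hpair a (by simp) j (by simp [hj]))
          (hpair a (by simp) k (by simp [hk])) (hpair j (by simp [hj]) k (by simp [hk]))
        exact ⟨x, ⟨hxa, hxj⟩, hxa, hxk⟩)
    simp only [Set.mem_iInter] at hm
    obtain ⟨k, hk⟩ := hs
    refine ⟨m, Set.mem_iInter₂.mpr fun j hj => ?_⟩
    rcases Finset.mem_cons.mp hj with rfl | hj
    · exact (hm k hk).1
    · exact (hm j hj).2

end SimpleGraph

theorem IsJoinTreeOf.isPathConvex {V ι : Type*} {T : SimpleGraph ι} {lab : ι → Finset V}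
    {E : Finset (Finset V)} (h : IsJoinTreeOf T lab E) (v : V) :
    T.IsPathConvex {i | v ∈ lab i} :=
  h.1.isAcyclic.isPathConvex_of_preconnected_induce (h.2.2.2 v)

theorem HGAcyclic.exists_forall_subset_of_nbr {V : Type*} {E : Finset (Finset V)}
    (hE : HGAcyclic E) (hnbr : ∀ a b, (∃ e ∈ E, a ∈ e) → (∃ e ∈ E, b ∈ e) → Nbr E a b) :
    ∃ m ∈ E, ∀ s ∈ E, s ⊆ m := by
  classical
  obtain ⟨ι, T, lab, hT⟩ := hE
  have hocc : ∀ {a}, a ∈ E.biUnion id ↔ ∃ e ∈ E, a ∈ e := by simp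
  obtain ⟨m, hm⟩ := hT.1.connected.nonempty_biInter_of_isPathConvex
    (S := fun v => {i | v ∈ lab i}) (s := E.biUnion id) (fun v _ => hT.isPathConvex v)
    fun a ha b hb => by
      obtain ⟨e, he, hae, hbe⟩ := hnbr a b (hocc.mp ha) (hocc.mp hb)
      obtain ⟨i, rfl⟩ := hT.2.2.1 e he
      exact ⟨i, hae, hbe⟩
  simp only [Set.mem_iInter] at hm
  exact ⟨lab m, hT.2.1 m, fun s hs x hx => hm x (hocc.mpr ⟨s, hs, hx⟩)⟩

/-- Let `F` be an acyclic family of hyperedges all containing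
a common vertex `v_i`.  If `F` has no maximum element under inclusion, then
there exist two vertices `a`, `b` appearing in (hyperedges of) `F` that are not
neighbors, while `v_i` is a neighbor of both — the pattern of a common neighbor
of two non-neighbors. -/
theorem no_maximum_gives_nonneighbors {V : Type*}
    (F : Finset (Finset V)) (hacyc : HGAcyclic F)
    (vi : V) (hvi : ∀ e ∈ F, vi ∈ e)
    (hnomax : ¬ ∃ m ∈ F, ∀ s ∈ F, s ⊆ m) :
    ∃ a b : V, a ≠ b ∧ a ≠ vi ∧ b ≠ vi ∧
      (∃ e ∈ F, a ∈ e) ∧ (∃ e ∈ F, b ∈ e) ∧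
      ¬ Nbr F a b ∧ Nbr F a vi ∧ Nbr F b vi := by
  have hnbr_vi : ∀ a, (∃ e ∈ F, a ∈ e) → Nbr F a vi := fun a ⟨e, he, ha⟩ => ⟨e, he, ha, hvi e he⟩
  by_contra hcon
  refine hnomax (hacyc.exists_forall_subset_of_nbr fun a b ha hb => ?_)
  by_cases hab : a = b
  · obtain ⟨e, he, hae⟩ := ha
    exact ⟨e, he, hae, hab ▸ hae⟩
  by_cases ha' : a = vi
  · obtain ⟨e, he, hbe, hvie⟩ := hnbr_vi b hb
    exact ⟨e, he, ha' ▸ hvie, hbe⟩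
  by_cases hb' : b = vi
  · exact hb' ▸ hnbr_vi a ha
  by_contra hnab
  exact hcon ⟨a, b, hab, ha', hb', ha, hb, hnab, hnbr_vi a ha, hnbr_vi b hb⟩
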